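/- The constant graphic sequence (2, 2, …, 2) of length 2s-1 has the property that every realization is a disjoint union of cycles, and in any such realization the maximum independent set has size at most s - 1; consequently its complementary sequence is not potentially K_s-graphic. -/
import Mathlib


open SimpleGraph
open scoped Classical

/-- Degree of a vertex. -/
noncomputable def deg {V : Type} (G : SimpleGraph V) (v : V) : ℕ := Nat.card (G.neighborSet v)

/-- Number of vertices of degree exactly 1 (leaves for trees/forests). -/
noncomputable def numLeaves {V : Type} (G : SimpleGraph V) : ℕ := Nat.card {v : V // deg G v = 1}

/-- Number of connected components containing at least one edge. -/
noncomputable def numEdgeComps {V : Type} (G : SimpleGraph V) : ℕ :=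
  Nat.card {c : G.ConnectedComponent // ∃ v w : V, G.Adj v w ∧ G.connectedComponentMk v = c}

/-- Maximum degree. -/
noncomputable def maxDeg {V : Type} (G : SimpleGraph V) : ℕ := sSup (Set.range (deg G))

/-- `G` and `H` pack: a bijection sends edges of `H` to non-edges of `G`. -/
def Packs {V W : Type} (G : SimpleGraph V) (H : SimpleGraph W) : Prop :=
  ∃ f : W ≃ V, ∀ x y : W, H.Adj x y → ¬ G.Adj (f x) (f y)

/-- `G` contains a copy of `H` as a subgraph. -/
def ContainsCopy {V W : Type} (G : SimpleGraph V) (H : SimpleGraph W) : Prop :=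
  ∃ f : W ↪ V, ∀ x y : W, H.Adj x y → G.Adj (f x) (f y)

/-- `G` realizes the degree sequence `π`. -/
def IsRealization {n : ℕ} (G : SimpleGraph (Fin n)) (π : Fin n → ℕ) : Prop :=
  ∀ i, deg G i = π i

/-- `π` is a graphic sequence. -/
def Graphic {n : ℕ} (π : Fin n → ℕ) : Prop :=
  ∃ G : SimpleGraph (Fin n), IsRealization G π

/-- `π` is potentially `H`-graphic. -/
def PotentiallyGraphic {n : ℕ} {W : Type} (π : Fin n → ℕ) (H : SimpleGraph W) : Prop :=
  ∃ G : SimpleGraph (Fin n), IsRealization G π ∧ ContainsCopy G H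

/-- The complementary sequence `π̄ = (n-1-d_n, …, n-1-d_1)`. -/
def compSeq {n : ℕ} (π : Fin n → ℕ) : Fin n → ℕ := fun i => n - 1 - π i.rev

/-- The potential-Ramsey number. -/
noncomputable def rpot {W₁ W₂ : Type} (H₁ : SimpleGraph W₁) (H₂ : SimpleGraph W₂) : ℕ :=
  sInf {N : ℕ | ∀ π : Fin N → ℕ, Antitone π → Graphic π →
    PotentiallyGraphic π H₁ ∨ PotentiallyGraphic (compSeq π) H₂}

/-- The star `K_{1,t-1}` on `t` vertices, centered at vertex `0`. -/
def starGraph (t : ℕ) : SimpleGraph (Fin t) := SimpleGraph.fromRel (fun i _ => (i : ℕ) = 0)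

lemma deg_eq_degree {V : Type} [Fintype V] (G : SimpleGraph V) (v : V) :
    deg G v = G.degree v := by
  classical
  rw [deg, Nat.card_eq_fintype_card, ← SimpleGraph.card_neighborSet_eq_degree]

lemma indep_card_le {s : ℕ} (hs : 2 ≤ s) (G : SimpleGraph (Fin (2 * s - 1)))
    (hG : ∀ v, deg G v = 2) (I : Finset (Fin (2 * s - 1)))
    (hI : ∀ a ∈ I, ∀ b ∈ I, ¬ G.Adj a b) : I.card ≤ s - 1 := by
  classical
  have hdeg : ∀ v, G.degree v = 2 := fun v => by rw [← deg_eq_degree]; exact hG v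
  have key : 2 * I.card ≤ 2 * (Finset.univ \ I).card := by
    have h1 : 2 * I.card = ∑ a ∈ I, (G.neighborFinset a).card := by
      simp [SimpleGraph.card_neighborFinset_eq_degree, hdeg, mul_comm]
    have h2 : ∀ a ∈ I, (G.neighborFinset a).card
        = ∑ b ∈ Finset.univ \ I, (if G.Adj a b then 1 else 0) := by
      intro a ha
      rw [← Finset.card_filter]
      congr 1
      ext b
      simp only [SimpleGraph.mem_neighborFinset, Finset.mem_filter, Finset.mem_sdiff,
        Finset.mem_univ, true_and]
      constructor
      · intro hab
        exact ⟨fun hb => hI a ha b hb hab, hab⟩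
      · exact fun h => h.2
    rw [h1, Finset.sum_congr rfl h2, Finset.sum_comm]
    have := Finset.sum_le_card_nsmul (Finset.univ \ I)
      (fun b => ∑ a ∈ I, (if G.Adj a b then 1 else 0)) 2 ?_
    · simpa [mul_comm] using this
    intro b _
    calc ∑ a ∈ I, (if G.Adj a b then 1 else 0)
        ≤ ∑ a ∈ Finset.univ, (if G.Adj a b then 1 else 0) := by
          apply Finset.sum_le_sum_of_subset (Finset.subset_univ I)
      _ = (G.neighborFinset b).card := by
          rw [← Finset.card_filter]
          congr 1
          ext a
          simp [SimpleGraph.mem_neighborFinset, G.adj_comm]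
      _ = 2 := by rw [SimpleGraph.card_neighborFinset_eq_degree, hdeg]
  have hcard : (Finset.univ \ I).card = (2 * s - 1) - I.card := by
    rw [Finset.card_sdiff_of_subset (Finset.subset_univ I)]
    simp
  have hle : I.card ≤ 2 * s - 1 := by
    simpa using Finset.card_le_card (Finset.subset_univ I)
  rw [hcard] at key
  omega

/-- Every realization of the all-2 sequence of length 2s-1 is 2-regular (a disjoint union
of cycles), has independence number at most s-1, and consequently the complementary
sequence is not potentially K_s-graphic. -/
theorem two_regular_independence (s : ℕ) (hs : 2 ≤ s) :
    (∀ G : SimpleGraph (Fin (2 * s - 1)),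
        IsRealization G (fun _ => 2) → ∀ v, deg G v = 2) ∧
    (∀ G : SimpleGraph (Fin (2 * s - 1)), IsRealization G (fun _ => 2) →
        ∀ I : Finset (Fin (2 * s - 1)),
          (∀ a ∈ I, ∀ b ∈ I, ¬ G.Adj a b) → I.card ≤ s - 1) ∧
    ¬ PotentiallyGraphic (compSeq (fun _ : Fin (2 * s - 1) => 2))
        (⊤ : SimpleGraph (Fin s)) := by
  constructor
  · intro G hG v; exact hG v
  refine ⟨fun G hG I hI => indep_card_le hs G (fun v => hG v) I hI, ?_⟩
  rintro ⟨G, hreal, f, hf⟩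
  classical
  have hcardV : Fintype.card (Fin (2 * s - 1)) = 2 * s - 1 := Fintype.card_fin _
  have hGdeg : ∀ v, G.degree v = 2 * s - 1 - 1 - 2 := by
    intro v
    have := hreal v
    rw [deg_eq_degree] at this
    simpa [compSeq] using this
  have hcompl : ∀ v, deg Gᶜ v = 2 := by
    intro v
    rw [deg_eq_degree, SimpleGraph.degree_compl, hGdeg, hcardV]
    omega
  set I : Finset (Fin (2 * s - 1)) := Finset.univ.image f with hIdef
  have hIcard : I.card = s := by
    rw [hIdef, Finset.card_image_of_injective _ f.injective, Finset.card_univ,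
      Fintype.card_fin]
  have hindep : ∀ a ∈ I, ∀ b ∈ I, ¬ Gᶜ.Adj a b := by
    intro a ha b hb hab
    simp only [hIdef, Finset.mem_image, Finset.mem_univ, true_and] at ha hb
    obtain ⟨x, rfl⟩ := ha
    obtain ⟨y, rfl⟩ := hb
    have hxy : x ≠ y := fun h => hab.ne (by rw [h])
    exact hab.2 (hf x y (by simp [hxy]))
  have := indep_card_le hs Gᶜ hcompl I hindep
  omega
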